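/- Let Frac(L·R) = Frac(R) + 1/Frac(L) in ℚ ∪ {∞}. Then for every expression A with Frac(A) = w, the flype identity holds numerically: Frac((((-A)·1)·1)·(-1)) = w, i.e., -1 + 1/(1 + 1/(-1 + 1/(-w))) = w for all w ∈ ℚ ∪ {∞}. -/

import Mathlib

/-- The projective rational line `ℚ ∪ {∞}`, with `none` playing the role of `∞`. -/
abbrev QInf := Option ℚ

/-- Negation on `ℚ ∪ {∞}`, with `-∞ = ∞`. -/
def qneg : QInf → QInf
  | none => none
  | some q => some (-q)

/-- Reciprocal on `ℚ ∪ {∞}`, with `1/0 = ∞` and `1/∞ = 0`. -/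
def qinv : QInf → QInf
  | none => some 0
  | some q => if q = 0 then none else some q⁻¹

/-- Addition on `ℚ ∪ {∞}`, with `x + ∞ = ∞ + x = ∞`. -/
def qadd : QInf → QInf → QInf
  | none, _ => none
  | _, none => none
  | some a, some b => some (a + b)

/-- Tangle expressions: the free magma generated by integer leaves,
with the binary product corresponding to Conway's tangle multiplication. -/
inductive Tang where
  | leaf : ℤ → Tang
  | mul : Tang → Tang → Tang

/-- The Conway fraction of a tangle expression:
`Frac n = n` on integer leaves and `Frac (L·R) = Frac R + 1/Frac L` in `ℚ ∪ {∞}`. -/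
def Frac : Tang → QInf
  | .leaf n => some (n : ℚ)
  | .mul L R => qadd (Frac R) (qinv (Frac L))

/-- Leafwise negation of a tangle expression (mirror reflection). -/
def negT : Tang → Tang
  | .leaf n => .leaf (-n)
  | .mul L R => .mul (negT L) (negT R)

lemma qneg_qinv (x : QInf) : qneg (qinv x) = qinv (qneg x) := by
  cases x with
  | none => simp [qneg, qinv]
  | some q =>
    by_cases h : q = 0
    · simp [qneg, qinv, h]
    · simp [qneg, qinv, h, inv_neg]

lemma qneg_qadd (x y : QInf) : qneg (qadd x y) = qadd (qneg x) (qneg y) := by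
  cases x <;> cases y <;> simp [qneg, qadd] <;> ring

lemma Frac_negT (A : Tang) : Frac (negT A) = qneg (Frac A) := by
  induction A with
  | leaf n => simp [Frac, negT, qneg]
  | mul L R ihL ihR =>
    simp [Frac, negT, ihL, ihR, qneg_qadd, qneg_qinv]

lemma key (w : QInf) :
    qadd (some (-1))
      (qinv (qadd (some 1) (qinv (qadd (some (-1)) (qinv (qneg w)))))) = w := by
  cases w with
  | none => norm_num [qneg, qinv, qadd]
  | some q =>
    by_cases h0 : q = 0
    · norm_num [h0, qneg, qinv, qadd]
    · by_cases h1 : q = -1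
      · norm_num [h1, qneg, qinv, qadd]
      · have hq : (-q : ℚ) ≠ 0 := neg_ne_zero.mpr h0
        have h2 : (-1 : ℚ) + (-q)⁻¹ ≠ 0 := by
          intro h
          have : ((-q : ℚ))⁻¹ = 1 := by linarith
          rw [inv_eq_one] at this
          exact h1 (by linarith)
        have h3 : (1 : ℚ) + ((-1) + (-q)⁻¹)⁻¹ ≠ 0 := by
          intro h
          have e : ((-1 : ℚ) + (-q)⁻¹)⁻¹ = -1 := by linarith
          rw [inv_eq_iff_eq_inv] at e
          norm_num at e
          exact h0 e
        simp only [qneg, qinv, qadd, if_neg hq, if_neg h2, if_neg h3]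
        congr 1
        have hq1 : (1 : ℚ) + q ≠ 0 := fun h => h1 (by linarith)
        have e1 : (-1 : ℚ) + (-q)⁻¹ = -((1 + q) / q) := by
          field_simp
          ring
        rw [e1]
        have e2 : (1 : ℚ) + (-((1 + q) / q))⁻¹ = (1 + q)⁻¹ := by
          rw [inv_neg, inv_div]
          field_simp
          ring
        rw [e2, inv_inv]
        ring

/-- The flype identity for the Conway fraction: for the flype
`A = ((-(A·1))·1)·(-1)` we have `Frac (((-(A·1))·1)·(-1)) = Frac A`, i.e.
numerically `-1 + 1/(1 + 1/(-1 + 1/(-w))) = w` for all `w ∈ ℚ ∪ {∞}`. -/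
theorem stmt_5 :
    (∀ A : Tang,
      Frac (Tang.mul (Tang.mul (negT (Tang.mul A (Tang.leaf 1))) (Tang.leaf 1))
        (Tang.leaf (-1))) = Frac A) ∧
    (∀ w : QInf,
      qadd (some (-1))
        (qinv (qadd (some 1) (qinv (qadd (some (-1)) (qinv (qneg w)))))) = w) := by
  constructor
  · intro A
    simp only [Frac, Frac_negT, qneg_qadd, qneg_qinv]
    have := key (Frac A)
    simpa [Frac, qneg, qinv, qadd] using this
  · exact key
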